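/- Let p : B → E be a pure morphism of commutative rings and let f : X → Y be an injective B-linear map whose cokernel pair (the two coprojections Y ⇉ Y ⊔_X Y into the pushout of f with itself) becomes a split pair after applying E ⊗[B] -. Then E ⊗[B] f is injective. -/

import Mathlib

/-!
Work with characters `M⋆ = Hom(M, ℚ/ℤ)`. Purity of `B → E` splits the restriction `E⋆ → B⋆`, and a
splitting `ρ` makes `M⋆` a natural retract of `(E ⊗ M)⋆`. With `C = Y ⧸ f X` and
`j : C → Y ⊔_X Y`, `[y] ↦ i₂ y - i₁ y`, the split equalizer makes `t ∘ (E ⊗ j)` a section of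
`E ⊗ Y → E ⊗ C`, so the dual of that map is split injective and, being a retract of it, so is
`C⋆ → Y⋆`. Hence `0 → C⋆ → Y⋆ → X⋆ → 0` splits, and a section of `f⋆` extends every character of
`N ⊗ X` along `N ⊗ f`; so `N ⊗ f` is injective for every `N`, in particular for `N = E`.
-/

open TensorProduct

namespace CharacterModule

variable {R : Type*} [CommRing R] {A A' A'' : Type*} [AddCommGroup A] [AddCommGroup A']
  [AddCommGroup A''] [Module R A] [Module R A'] [Module R A'']

theorem exact_dual {f : A →ₗ[R] A'} {g : A' →ₗ[R] A''} (h : Function.Exact f g) :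
    Function.Exact (dual g) (dual f) := by
  intro η
  constructor
  · intro hη
    have hker : g.rangeRestrict.toAddMonoidHom.ker ≤ η.ker := by
      intro y hy
      obtain ⟨x, rfl⟩ := (h y).mp (congr_arg Subtype.val hy)
      exact congr($hη x)
    obtain ⟨ξ, hξ⟩ := dual_surjective_of_injective (LinearMap.range g).subtype
      Subtype.val_injective
      (AddMonoidHom.liftOfSurjective _ g.surjective_rangeRestrict ⟨η, hker⟩)
    refine ⟨ξ, ?_⟩
    ext y
    exact congr($hξ (g.rangeRestrict y)).trans
      (AddMonoidHom.liftOfRightInverse_comp_apply _ _ _ ⟨η, hker⟩ y)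
  · rintro ⟨ξ, rfl⟩
    rw [← LinearMap.comp_apply, ← dual_comp, h.linearMap_comp_eq_zero, dual_zero]
    rfl

theorem lTensor_injective_of_dual_comp_eq_id {f : A →ₗ[R] A'}
    (σ : CharacterModule A →ₗ[R] CharacterModule A') (hσ : dual f ∘ₗ σ = LinearMap.id)
    (N : Type*) [AddCommGroup N] [Module R N] :
    Function.Injective (f.lTensor N) := by
  rw [← dual_surjective_iff_injective]
  intro ξ
  refine ⟨homEquiv (σ ∘ₗ homEquiv.symm ξ), homEquiv.symm.injective ?_⟩
  ext n a
  exact congr($hσ (homEquiv.symm ξ n) a)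

section Purity

variable {B E : Type*} [CommRing B] [CommRing E] [Algebra B E]

theorem exists_dual_algebraLinearMap_comp_eq_id
    (hp : Function.Injective fun ψ : CharacterModule B => ψ ⊗ₜ[B] (1 : E)) :
    ∃ ρ : CharacterModule B →ₗ[B] CharacterModule E,
      dual (Algebra.linearMap B E) ∘ₗ ρ = LinearMap.id := by
  let evalOne : CharacterModule (CharacterModule B) := AddMonoidHom.mk' (· 1) fun _ _ => rfl
  obtain ⟨Λ, hΛ⟩ := dual_surjective_of_injective ((TensorProduct.mk B _ E).flip 1) hp evalOne
  refine ⟨curry Λ, ?_⟩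
  ext ψ b
  calc Λ (ψ ⊗ₜ algebraMap B E b) = Λ ((b • ψ) ⊗ₜ 1) := by
        rw [Algebra.algebraMap_eq_smul_one, ← smul_tmul]
    _ = (b • ψ) 1 := congr($hΛ (b • ψ))
    _ = ψ b := by rw [smul_apply, smul_eq_mul, mul_one]

variable {M P : Type*} [AddCommGroup M] [Module B M] [AddCommGroup P] [Module B P]

noncomputable def curryScalar : CharacterModule M →ₗ[B] M →ₗ[B] CharacterModule B :=
  curry ∘ₗ dual (TensorProduct.rid B M).toLinearMap

theorem curryScalar_apply (η : CharacterModule M) (m : M) (b : B) :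
    curryScalar η m b = η (b • m) := rfl

noncomputable def extendOfSection (ρ : CharacterModule B →ₗ[B] CharacterModule E) :
    CharacterModule M →ₗ[B] CharacterModule (E ⊗[B] M) :=
  dual (TensorProduct.comm B E M).toLinearMap ∘ₗ homEquiv.toLinearMap ∘ₗ
    LinearMap.llcomp B M _ _ ρ ∘ₗ curryScalar

theorem extendOfSection_tmul (ρ : CharacterModule B →ₗ[B] CharacterModule E)
    (η : CharacterModule M) (a : E) (m : M) :
    extendOfSection ρ η (a ⊗ₜ m) = ρ (curryScalar η m) a := rfl

theorem dual_lTensor_comp_extendOfSection (ρ : CharacterModule B →ₗ[B] CharacterModule E)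
    (g : M →ₗ[B] P) :
    dual (g.lTensor E) ∘ₗ extendOfSection ρ = extendOfSection ρ ∘ₗ dual g := by
  ext η v
  induction v using TensorProduct.induction_on with
  | zero => simp only [map_zero]
  | tmul a m =>
    show extendOfSection ρ η (a ⊗ₜ g m) = extendOfSection ρ (dual g η) (a ⊗ₜ m)
    rw [extendOfSection_tmul, extendOfSection_tmul]
    congr 2
    ext b
    exact congr_arg η (g.map_smul b m).symm
  | add v w hv hw => simp only [LinearMap.comp_apply] at hv hw ⊢; rw [map_add, map_add, hv, hw]

theorem dual_mk_one_comp_extendOfSection (ρ : CharacterModule B →ₗ[B] CharacterModule E)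
    (hρ : dual (Algebra.linearMap B E) ∘ₗ ρ = LinearMap.id) :
    dual (TensorProduct.mk B E M 1) ∘ₗ extendOfSection ρ = LinearMap.id := by
  ext η m
  calc ρ (curryScalar η m) (1 : E) = ρ (curryScalar η m) (algebraMap B E 1) := by
        rw [(algebraMap B E).map_one]
    _ = η m := congr($hρ (curryScalar η m) 1).trans (by simp [curryScalar_apply])

theorem exists_leftInverse_dual_of_lTensor_comp_eq_id
    (ρ : CharacterModule B →ₗ[B] CharacterModule E)
    (hρ : dual (Algebra.linearMap B E) ∘ₗ ρ = LinearMap.id)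
    {g : M →ₗ[B] P} (t : E ⊗[B] P →ₗ[B] E ⊗[B] M) (ht : g.lTensor E ∘ₗ t = LinearMap.id) :
    ∃ r : CharacterModule M →ₗ[B] CharacterModule P, r ∘ₗ dual g = LinearMap.id := by
  refine ⟨dual (t ∘ₗ TensorProduct.mk B E P 1) ∘ₗ extendOfSection ρ, ?_⟩
  calc dual (t ∘ₗ TensorProduct.mk B E P 1) ∘ₗ extendOfSection ρ ∘ₗ dual g
      = dual (TensorProduct.mk B E P 1) ∘ₗ dual (g.lTensor E ∘ₗ t) ∘ₗ extendOfSection ρ := by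
        rw [← dual_lTensor_comp_extendOfSection, dual_comp, dual_comp]
        rfl
    _ = LinearMap.id := by
        rw [ht]
        exact dual_mk_one_comp_extendOfSection ρ hρ

end Purity

end CharacterModule

namespace LinearMap

theorem comp_comp_eq_id_of_splitEqualizer {S M P Q W : Type*} [Ring S] [AddCommGroup M]
    [Module S M] [AddCommGroup P] [Module S P] [AddCommGroup Q] [Module S Q] [AddCommGroup W]
    [Module S W] {u₁ u₂ : M →ₗ[S] Q} {g : M →ₗ[S] P} (hg : Function.Surjective g)
    {k : Q →ₗ[S] P} (hk₁ : k ∘ₗ u₁ = 0) (hk₂ : k ∘ₗ u₂ = g) {j : P →ₗ[S] Q}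
    (hj : j ∘ₗ g = u₂ - u₁) {e : W →ₗ[S] M} {s : M →ₗ[S] W} {t : Q →ₗ[S] M}
    (he : u₁ ∘ₗ e = u₂ ∘ₗ e) (ht₂ : t ∘ₗ u₂ = id) (ht₁ : t ∘ₗ u₁ = e ∘ₗ s) :
    g ∘ₗ t ∘ₗ j = id := by
  have hge : g ∘ₗ e = 0 := by rw [← hk₂, comp_assoc, ← he, ← comp_assoc, hk₁, zero_comp]
  rw [← cancel_right hg]
  calc (g ∘ₗ t ∘ₗ j) ∘ₗ g = g ∘ₗ t ∘ₗ (u₂ - u₁) := by rw [comp_assoc, comp_assoc, hj]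
    _ = g - (g ∘ₗ e) ∘ₗ s := by rw [comp_sub, comp_sub, ht₂, ht₁, comp_id, comp_assoc]
    _ = id ∘ₗ g := by rw [hge, zero_comp, sub_zero, id_comp]

variable {R X Y : Type*} [CommRing R] [AddCommGroup X] [Module R X] [AddCommGroup Y] [Module R Y]
  (f : X →ₗ[R] Y)

abbrev CokernelPair : Type _ := (Y × Y) ⧸ range (f.prod (-f))

def cokernelPairInl : Y →ₗ[R] f.CokernelPair := (range (f.prod (-f))).mkQ ∘ₗ inl R Y Y

def cokernelPairInr : Y →ₗ[R] f.CokernelPair := (range (f.prod (-f))).mkQ ∘ₗ inr R Y Y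

def cokernelPairToCokernel : f.CokernelPair →ₗ[R] Y ⧸ range f :=
  (range (f.prod (-f))).liftQ ((range f).mkQ ∘ₗ snd R Y Y) <| by
    rintro _ ⟨x, rfl⟩
    simp

def cokernelToCokernelPair : (Y ⧸ range f) →ₗ[R] f.CokernelPair :=
  (range f).liftQ (f.cokernelPairInr - f.cokernelPairInl) <| by
    rintro _ ⟨x, rfl⟩
    rw [mem_ker, sub_apply, sub_eq_zero, cokernelPairInl, cokernelPairInr, comp_apply,
      comp_apply, Submodule.mkQ_apply, Submodule.mkQ_apply, Submodule.Quotient.eq]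
    exact ⟨-x, by simp⟩

theorem cokernelPairToCokernel_comp_inl : f.cokernelPairToCokernel ∘ₗ f.cokernelPairInl = 0 := by
  ext y
  simp [cokernelPairToCokernel, cokernelPairInl]

theorem cokernelPairToCokernel_comp_inr :
    f.cokernelPairToCokernel ∘ₗ f.cokernelPairInr = (range f).mkQ := by
  ext y
  simp [cokernelPairToCokernel, cokernelPairInr]

theorem cokernelToCokernelPair_comp_mkQ :
    f.cokernelToCokernelPair ∘ₗ (range f).mkQ = f.cokernelPairInr - f.cokernelPairInl :=
  (range f).liftQ_mkQ _ _

theorem baseChange_mkQ_comp_comp_eq_id_of_splitEqualizer {S W : Type*} [CommRing S] [Algebra R S]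
    [AddCommGroup W] [Module S W] {e : W →ₗ[S] S ⊗[R] Y} {s : S ⊗[R] Y →ₗ[S] W}
    {t : S ⊗[R] f.CokernelPair →ₗ[S] S ⊗[R] Y}
    (he : f.cokernelPairInl.baseChange S ∘ₗ e = f.cokernelPairInr.baseChange S ∘ₗ e)
    (ht₂ : t ∘ₗ f.cokernelPairInr.baseChange S = id)
    (ht₁ : t ∘ₗ f.cokernelPairInl.baseChange S = e ∘ₗ s) :
    (range f).mkQ.baseChange S ∘ₗ t ∘ₗ f.cokernelToCokernelPair.baseChange S = id :=
  comp_comp_eq_id_of_splitEqualizer (baseChange_surjective S (range f).mkQ_surjective)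
    (by rw [← baseChange_comp, cokernelPairToCokernel_comp_inl, baseChange_zero])
    (by rw [← baseChange_comp, cokernelPairToCokernel_comp_inr])
    (by rw [← baseChange_comp, cokernelToCokernelPair_comp_mkQ, baseChange_sub]) he ht₂ ht₁

end LinearMap

open CharacterModule in
/-- If `p : B → E` is pure and `f : X → Y` is an injective `B`-linear map whose
cokernel pair becomes a split pair after applying `E ⊗[B] -`, then `E ⊗[B] f`
is injective. -/
theorem baseChange_injective_of_cokernel_pair_split
    {B E : Type u} [CommRing B] [CommRing E] [Algebra B E]
    (hp : ∀ (N : Type u) [AddCommGroup N] [Module B N],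
      Function.Injective (fun n : N => (n ⊗ₜ[B] (1 : E) : N ⊗[B] E)))
    {X Y : Type u} [AddCommGroup X] [Module B X] [AddCommGroup Y] [Module B Y]
    (f : X →ₗ[B] Y) (hfinj : Function.Injective f)
    -- the cokernel pair `i₁, i₂ : Y ⇉ Y ⊔_X Y`
    (i₁ i₂ : Y →ₗ[B] ((Y × Y) ⧸ LinearMap.range (f.prod (-f))))
    (hi₁ : i₁ = (LinearMap.range (f.prod (-f))).mkQ.comp (LinearMap.inl B Y Y))
    (hi₂ : i₂ = (LinearMap.range (f.prod (-f))).mkQ.comp (LinearMap.inr B Y Y))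
    -- the pair `(E ⊗ i₁, E ⊗ i₂)` admits a split equalizer in `Mod_E`
    (hsplit : ∃ (W : Type u) (_ : AddCommGroup W) (_ : Module E W)
        (e : W →ₗ[E] E ⊗[B] Y) (s : (E ⊗[B] Y) →ₗ[E] W)
        (t : (E ⊗[B] ((Y × Y) ⧸ LinearMap.range (f.prod (-f)))) →ₗ[E] E ⊗[B] Y),
      (LinearMap.baseChange E i₁).comp e = (LinearMap.baseChange E i₂).comp e ∧
      s.comp e = LinearMap.id ∧
      t.comp (LinearMap.baseChange E i₂) = LinearMap.id ∧
      t.comp (LinearMap.baseChange E i₁) = e.comp s) :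
    Function.Injective (LinearMap.baseChange E f) := by
  subst hi₁ hi₂
  obtain ⟨W, _, _, e, s, t, he, -, ht₂, ht₁⟩ := hsplit
  have hsection := f.baseChange_mkQ_comp_comp_eq_id_of_splitEqualizer he ht₂ ht₁
  obtain ⟨ρ, hρ⟩ := exists_dual_algebraLinearMap_comp_eq_id (hp _)
  obtain ⟨r, hr⟩ := exists_leftInverse_dual_of_lTensor_comp_eq_id ρ hρ
    ((t ∘ₗ f.cokernelToCokernelPair.baseChange E).restrictScalars B)
    (LinearMap.ext fun x => congr($hsection x))
  have hsplitting := ((exact_dual f.exact_map_mkQ_range).split_tfae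
    (dual_injective_of_surjective _ (LinearMap.range f).mkQ_surjective)
    (dual_surjective_of_injective f hfinj)).out 1 0
  obtain ⟨σ, hσ⟩ := hsplitting.mp ⟨r, hr⟩
  rw [LinearMap.baseChange_eq_ltensor]
  exact lTensor_injective_of_dual_comp_eq_id σ hσ E
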